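/- Every solution u of the BVP satisfies: u′(t) ≤ 0 for all t ∈ [0,T], u′ is nonincreasing on [0,T] (hence u is concave on [0,T]), u is nonincreasing on [0,T], the maximum of u on [0,T] is u(0), and the minimum of u on [0,T] is u(T). -/
import Mathlib


open Set MeasureTheory

/-- The p-Laplacian map `φ_p(s) = |s|^(p-2) s` (with `φ_p 0 = 0`). -/
noncomputable def phi (p s : ℝ) : ℝ := |s| ^ (p - 2) * s

lemma phi_zero (p : ℝ) : phi p 0 = 0 := by simp [phi]

lemma phi_neg' (p s : ℝ) : phi p (-s) = - phi p s := by
  rw [phi, phi, abs_neg]; ring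

lemma phi_of_nonneg {p s : ℝ} (hp : 1 < p) (hs : 0 ≤ s) : phi p s = s ^ (p - 1) := by
  rcases hs.eq_or_lt with h | h
  · rw [phi, ← h]
    simp [Real.zero_rpow (by intro hc; linarith [sub_eq_zero.mp hc] : p - 1 ≠ 0)]
  · rw [phi, abs_of_pos h, show p - 1 = (p - 2) + 1 by ring, Real.rpow_add h, Real.rpow_one]

lemma abs_phi {p : ℝ} (hp : 1 < p) (s : ℝ) : |phi p s| = |s| ^ (p - 1) := by
  rw [phi, abs_mul, abs_of_nonneg (Real.rpow_nonneg (abs_nonneg s) _)]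
  rcases eq_or_ne s 0 with h | h
  · simp [h, Real.zero_rpow (by intro hc; linarith [sub_eq_zero.mp hc] : p - 1 ≠ 0)]
  · rw [show p - 1 = (p - 2) + 1 by ring, Real.rpow_add (abs_pos.mpr h), Real.rpow_one]

lemma phi_strictMono {p : ℝ} (hp : 1 < p) : StrictMono (phi p) := by
  have hp1 : (0:ℝ) < p - 1 := by linarith
  intro a b hab
  rcases le_or_gt 0 a with ha | ha
  · rw [phi_of_nonneg hp ha, phi_of_nonneg hp (le_trans ha hab.le)]
    exact Real.rpow_lt_rpow ha hab hp1
  · rcases le_or_gt 0 b with hb | hb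
    · have h1 : phi p a < 0 :=
        mul_neg_of_pos_of_neg (Real.rpow_pos_of_pos (abs_pos.mpr ha.ne) _) ha
      have h2 : 0 ≤ phi p b := by
        rw [phi_of_nonneg hp hb]; exact Real.rpow_nonneg hb _
      linarith
    · have h2 := Real.rpow_lt_rpow (by linarith : (0:ℝ) ≤ -b) (by linarith : -b < -a) hp1
      rw [← phi_of_nonneg hp (by linarith : (0:ℝ) ≤ -b),
        ← phi_of_nonneg hp (by linarith : (0:ℝ) ≤ -a), phi_neg', phi_neg'] at h2
      linarith

lemma phi_continuous {p : ℝ} (hp : 1 < p) : Continuous (phi p) := by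
  rw [continuous_iff_continuousAt]
  intro s
  rcases eq_or_ne s 0 with rfl | h
  · have hb : ∀ x : ℝ, ‖phi p x‖ ≤ |x| ^ (p - 1) := by
      intro x; rw [Real.norm_eq_abs, abs_phi hp]
    have ht : Filter.Tendsto (fun x : ℝ => |x| ^ (p - 1)) (nhds 0) (nhds 0) := by
      have hc : ContinuousAt (fun x : ℝ => |x| ^ (p - 1)) 0 :=
        ContinuousAt.rpow_const continuous_abs.continuousAt (Or.inr (by linarith))
      simpa [ContinuousAt, abs_zero,
        Real.zero_rpow (by intro hc'; linarith [sub_eq_zero.mp hc'] : p - 1 ≠ 0)] using hc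
    have := squeeze_zero_norm hb ht
    simpa [ContinuousAt, phi_zero] using this
  · exact ((continuous_abs.continuousAt.rpow_const
      (Or.inl (abs_ne_zero.mpr h))).mul continuousAt_id)


/-- `h_u(r) = f(u(r)) / (∫₀ᵀ f(u(τ)) dτ)^k`. -/
noncomputable def hfun (T k : ℝ) (f u : ℝ → ℝ) (r : ℝ) : ℝ :=
  f (u r) / (∫ τ in (0:ℝ)..T, f (u τ)) ^ k

/-- `A_u = −(λβ/(1−β)) ∫₀^η h_u(r) dr`. -/
noncomputable def Afun (T η β lam k : ℝ) (f u : ℝ → ℝ) : ℝ :=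
  -(lam * β / (1 - β)) * ∫ r in (0:ℝ)..η, hfun T k f u r

/-- `g_u(s) = λ ∫₀^s h_u(r) dr − A_u`. -/
noncomputable def gfun (T η β lam k : ℝ) (f u : ℝ → ℝ) (s : ℝ) : ℝ :=
  lam * (∫ r in (0:ℝ)..s, hfun T k f u r) - Afun T η β lam k f u

/-- `B_u = (1/(1−β)) ( ∫₀^T φ_q(g_u(s)) ds − β ∫₀^η φ_q(g_u(s)) ds )`. -/
noncomputable def Bfun (T η β lam k q : ℝ) (f u : ℝ → ℝ) : ℝ :=
  (1 / (1 - β)) * ((∫ s in (0:ℝ)..T, phi q (gfun T η β lam k f u s))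
    - β * ∫ s in (0:ℝ)..η, phi q (gfun T η β lam k f u s))

/-- `u` (with derivative `u'`) is a solution of the boundary value problem:
`u` is continuously differentiable on `[0,T]`, `φ_p ∘ u'` is differentiable on `(0,T)` with
`−(φ_p(u'(t)))' = λ h_u(t)` there, `φ_p(u'(0)) − β φ_p(u'(η)) = 0` and `u(T) − β u(η) = 0`. -/
def IsSolution (T η β lam k p : ℝ) (f u u' : ℝ → ℝ) : Prop :=
  (∀ t ∈ Set.Icc (0:ℝ) T, HasDerivWithinAt u (u' t) (Set.Icc (0:ℝ) T) t) ∧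
  ContinuousOn u' (Set.Icc (0:ℝ) T) ∧
  (∀ t ∈ Set.Ioo (0:ℝ) T, HasDerivAt (fun s => phi p (u' s)) (-(lam * hfun T k f u t)) t) ∧
  phi p (u' 0) - β * phi p (u' η) = 0 ∧
  u T - β * u η = 0

/-- For every solution of the BVP: `u' ≤ 0` on `[0,T]`, `u'` is nonincreasing on `[0,T]`
(hence `u` is concave there), `u` is nonincreasing on `[0,T]`, the maximum of `u` on `[0,T]`
is `u 0` and the minimum is `u T`. -/
theorem solution_monotone_concave
    (T η β lam k p : ℝ) (f : ℝ → ℝ)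
    (hT : 0 < T) (hη : 0 < η) (hηT : η < T) (hβ0 : 0 < β) (hβ1 : β < 1)
    (hlam : 0 < lam) (hk : 0 < k) (hp : 1 < p)
    (hf : Continuous f) (hfpos : ∀ x, 0 < f x)
    (u u' : ℝ → ℝ) (hu : IsSolution T η β lam k p f u u') :
    (∀ t ∈ Set.Icc (0:ℝ) T, u' t ≤ 0) ∧
    AntitoneOn u' (Set.Icc (0:ℝ) T) ∧
    ConcaveOn ℝ (Set.Icc (0:ℝ) T) u ∧
    AntitoneOn u (Set.Icc (0:ℝ) T) ∧
    (∀ t ∈ Set.Icc (0:ℝ) T, u t ≤ u 0) ∧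
    (∀ t ∈ Set.Icc (0:ℝ) T, u T ≤ u t) := by
  obtain ⟨hu1, hu2, hu3, hu4, hu5⟩ := hu
  have hp1 : (0:ℝ) < p - 1 := by linarith
  have hucont : ContinuousOn u (Icc 0 T) := fun t ht => (hu1 t ht).continuousWithinAt
  have hCint : IntervalIntegrable (fun τ => f (u τ)) volume 0 T := by
    apply ContinuousOn.intervalIntegrable
    rw [uIcc_of_le hT.le]
    exact hf.comp_continuousOn hucont
  have hC : 0 < ∫ τ in (0:ℝ)..T, f (u τ) :=
    intervalIntegral.intervalIntegral_pos_of_pos_on hCint (fun x _ => hfpos _) hT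
  have hhpos : ∀ t, 0 < hfun T k f u t := fun t =>
    div_pos (hfpos _) (Real.rpow_pos_of_pos hC k)
  have hFc : ContinuousOn (fun s => phi p (u' s)) (Icc 0 T) :=
    (phi_continuous hp).comp_continuousOn hu2
  have hFanti : StrictAntiOn (fun s => phi p (u' s)) (Icc 0 T) := by
    apply strictAntiOn_of_deriv_neg (convex_Icc 0 T) hFc
    intro x hx
    rw [interior_Icc] at hx
    rw [(hu3 x hx).deriv]
    exact neg_lt_zero.mpr (mul_pos hlam (hhpos x))
  have h0mem : (0:ℝ) ∈ Icc (0:ℝ) T := ⟨le_refl 0, hT.le⟩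
  have hηmem : η ∈ Icc (0:ℝ) T := ⟨hη.le, hηT.le⟩
  have hTmem : T ∈ Icc (0:ℝ) T := ⟨hT.le, le_refl T⟩
  have hFη : phi p (u' η) ≤ 0 := by
    by_contra hpos
    push_neg at hpos
    have h1 : phi p (u' η) < phi p (u' 0) := hFanti h0mem hηmem hη
    nlinarith [mul_pos (by linarith : (0:ℝ) < 1 - β) hpos]
  have hF0 : phi p (u' 0) ≤ 0 := by nlinarith [mul_nonneg hβ0.le (neg_nonneg.mpr hFη)]
  have hFle : ∀ t ∈ Icc (0:ℝ) T, phi p (u' t) ≤ 0 := fun t ht =>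
    le_trans (hFanti.antitoneOn h0mem ht ht.1) hF0
  have hu'np : ∀ t ∈ Icc (0:ℝ) T, u' t ≤ 0 := by
    intro t ht
    by_contra hgt
    push_neg at hgt
    have h2 : phi p 0 < phi p (u' t) := phi_strictMono hp hgt
    rw [phi_zero] at h2
    exact absurd (hFle t ht) (not_le.mpr h2)
  have hu'anti : AntitoneOn u' (Icc (0:ℝ) T) := fun x hx y hy hxy =>
    (phi_strictMono hp).le_iff_le.mp (hFanti.antitoneOn hx hy hxy)
  have hdAt : ∀ t ∈ Ioo (0:ℝ) T, HasDerivAt u (u' t) t := fun t ht =>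
    (hu1 t (Ioo_subset_Icc_self ht)).hasDerivAt (Icc_mem_nhds ht.1 ht.2)
  have hderiveq : ∀ t ∈ Ioo (0:ℝ) T, deriv u t = u' t := fun t ht => (hdAt t ht).deriv
  have hdiff : DifferentiableOn ℝ u (interior (Icc (0:ℝ) T)) := by
    rw [interior_Icc]
    exact fun t ht => ((hdAt t ht).differentiableAt).differentiableWithinAt
  have hconc : ConcaveOn ℝ (Icc (0:ℝ) T) u := by
    apply AntitoneOn.concaveOn_of_deriv (convex_Icc 0 T) hucont hdiff
    intro x hx y hy hxy
    rw [interior_Icc] at hx hy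
    rw [hderiveq x hx, hderiveq y hy]
    exact hu'anti (Ioo_subset_Icc_self hx) (Ioo_subset_Icc_self hy) hxy
  have huanti : AntitoneOn u (Icc (0:ℝ) T) := by
    apply antitoneOn_of_deriv_nonpos (convex_Icc 0 T) hucont hdiff
    intro x hx
    rw [interior_Icc] at hx
    rw [hderiveq x hx]
    exact hu'np x (Ioo_subset_Icc_self hx)
  exact ⟨hu'np, hu'anti, hconc, huanti,
    fun t ht => huanti h0mem ht ht.1,
    fun t ht => huanti ht hTmem ht.2⟩
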